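/- Let T > 0, let y : [0,T] → ℝ be continuous, and let g, β : [0,T] → ℝ be integrable with g ≥ 0. Assume that for all 0 ≤ s ≤ t ≤ T: y(t) + ∫_s^t g(τ) y(τ) dτ ≤ y(s) + ∫_s^t β(τ) dτ. Then for all t ∈ [0,T]: y(t) ≤ y(0) exp( − ∫₀^t g(τ) dτ ) + ∫₀^t exp( − ∫_τ^t g(r) dr ) β(τ) dτ. -/

import Mathlib

/-!
Put `E u = exp (∫ τ in a..u, g τ)` and `P u = ∫ τ in b..u, (g τ * y τ - β τ)`. The function
`Ψ = E * (y b - P)` is absolutely continuous with `Ψ' = E * (g * (y b - P) - g * y + β)` a.e.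
The hypothesis at `(u, b)` says `y b - P u ≤ y u`, so `g ≥ 0` gives `Ψ' ≤ E * β`, and integrating
over `[a, b]` yields `E b * y b = Ψ b ≤ Ψ a + ∫ E β ≤ y a + ∫ E β`, the last step being the
hypothesis at `(a, b)`. As `g` is only integrable, `E` is merely absolutely continuous, which is
why the argument goes through the fundamental theorem of calculus for such functions.
-/

open MeasureTheory Real Set intervalIntegral

section AbsolutelyContinuous

variable {a b : ℝ}

theorem LipschitzOnWith.comp_absolutelyContinuousOnInterval {X Y : Type*} [PseudoMetricSpace X]
    [PseudoMetricSpace Y] {φ : X → Y} {K : NNReal} {s : Set X} (hφ : LipschitzOnWith K φ s)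
    {f : ℝ → X} (hf : AbsolutelyContinuousOnInterval f a b) (hfs : MapsTo f (uIcc a b) s) :
    AbsolutelyContinuousOnInterval (φ ∘ f) a b := by
  rw [absolutelyContinuousOnInterval_iff] at hf ⊢
  intro ε hε
  obtain ⟨δ, hδ, hfδ⟩ := hf (ε / (K + 1)) (by positivity)
  refine ⟨δ, hδ, fun E hE hEδ => ?_⟩
  calc ∑ i ∈ Finset.range E.1, dist (φ (f (E.2 i).1)) (φ (f (E.2 i).2))
      ≤ ∑ i ∈ Finset.range E.1, K * dist (f (E.2 i).1) (f (E.2 i).2) :=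
        Finset.sum_le_sum fun i hi =>
          hφ.dist_le_mul _ (hfs (hE.1 i hi).1) _ (hfs (hE.1 i hi).2)
    _ = K * ∑ i ∈ Finset.range E.1, dist (f (E.2 i).1) (f (E.2 i).2) := by
        rw [Finset.mul_sum]
    _ ≤ K * (ε / (K + 1)) := by gcongr; exact (hfδ E hE hEδ).le
    _ < (K + 1) * (ε / (K + 1)) := by gcongr; linarith
    _ = ε := by field_simp

theorem ContDiff.comp_absolutelyContinuousOnInterval {F : Type*} [NormedAddCommGroup F]
    [NormedSpace ℝ F] {φ : ℝ → F} (hφ : ContDiff ℝ 1 φ) {f : ℝ → ℝ}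
    (hf : AbsolutelyContinuousOnInterval f a b) :
    AbsolutelyContinuousOnInterval (φ ∘ f) a b := by
  obtain ⟨C, hC⟩ := hf.exists_bound
  obtain ⟨K, hK⟩ := hφ.contDiffOn.exists_lipschitzOnWith one_ne_zero (convex_Icc (-C) C)
    isCompact_Icc
  exact hK.comp_absolutelyContinuousOnInterval hf fun x hx => abs_le.mp (hC x hx)

theorem AbsolutelyContinuousOnInterval.integral_eq_sub_of_ae_hasDerivAt {f f' : ℝ → ℝ}
    (hf : AbsolutelyContinuousOnInterval f a b)
    (hf' : ∀ᵐ x, x ∈ uIcc a b → HasDerivAt f (f' x) x) :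
    ∫ x in a..b, f' x = f b - f a := by
  rw [← hf.integral_deriv_eq_sub]
  refine integral_congr_ae ?_
  filter_upwards [hf'] with x hx hxab
  exact (hx (uIoc_subset_uIcc hxab)).deriv.symm

theorem AbsolutelyContinuousOnInterval.intervalIntegrable_of_ae_hasDerivAt {f f' : ℝ → ℝ}
    (hf : AbsolutelyContinuousOnInterval f a b)
    (hf' : ∀ᵐ x, x ∈ uIcc a b → HasDerivAt f (f' x) x) :
    IntervalIntegrable f' volume a b := by
  refine hf.intervalIntegrable_deriv.congr_ae ?_
  rw [Filter.EventuallyEq, ae_restrict_iff' measurableSet_uIoc]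
  filter_upwards [hf'] with x hx hxab
  exact (hx (uIoc_subset_uIcc hxab)).deriv

end AbsolutelyContinuous

section Gronwall

variable {a b : ℝ} {y g β : ℝ → ℝ}

theorem exp_integral_mul_le_of_forall_add_integral_le (hab : a ≤ b)
    (hy : ContinuousOn y (Icc a b)) (hg : IntervalIntegrable g volume a b)
    (hβ : IntervalIntegrable β volume a b) (hg_nonneg : ∀ τ ∈ Icc a b, 0 ≤ g τ)
    (h : ∀ s ∈ Icc a b, y b + ∫ τ in s..b, g τ * y τ ≤ y s + ∫ τ in s..b, β τ) :
    exp (∫ τ in a..b, g τ) * y b ≤ y a + ∫ τ in a..b, exp (∫ r in a..τ, g r) * β τ := by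
  set E : ℝ → ℝ := fun u => exp (∫ τ in a..u, g τ)
  set r : ℝ → ℝ := fun τ => g τ * y τ - β τ
  set P : ℝ → ℝ := fun u => ∫ τ in b..u, r τ
  have hy' : ContinuousOn y (uIcc a b) := by rwa [uIcc_of_le hab]
  have hgy : IntervalIntegrable (fun τ => g τ * y τ) volume a b := hg.mul_continuousOn hy'
  have hr : IntervalIntegrable r volume a b := hgy.sub hβ
  have hE : AbsolutelyContinuousOnInterval E a b :=
    contDiff_exp.comp_absolutelyContinuousOnInterval
      (hg.absolutelyContinuousOnInterval_intervalIntegral left_mem_uIcc)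
  have hP : AbsolutelyContinuousOnInterval P a b :=
    hr.absolutelyContinuousOnInterval_intervalIntegral right_mem_uIcc
  set Ψ' : ℝ → ℝ := fun u => E u * (g u * (y b - P u) - r u)
  have hΨ : AbsolutelyContinuousOnInterval (fun u => E u * (y b - P u)) a b :=
    hE.mul ((LipschitzWith.const (y b)).lipschitzOnWith.absolutelyContinuousOnInterval.sub hP)
  have hΨ' : ∀ᵐ u, u ∈ uIcc a b → HasDerivAt (fun u => E u * (y b - P u)) (Ψ' u) u := by
    filter_upwards [hg.ae_hasDerivAt_integral, hr.ae_hasDerivAt_integral] with u hgu hru hu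
    exact ((hgu hu a left_mem_uIcc).exp.mul ((hru hu b right_mem_uIcc).const_sub (y b))).congr_deriv
      (by simp only [Ψ', E, P]; ring)
  have hP_eq : ∀ s ∈ Icc a b, P s = (∫ τ in s..b, β τ) - ∫ τ in s..b, g τ * y τ := by
    intro s hs
    have hsb : uIcc s b ⊆ uIcc a b := uIcc_subset_uIcc (Icc_subset_uIcc hs) right_mem_uIcc
    simp only [P, r]
    rw [integral_symm, integral_sub (hgy.mono_set hsb) (hβ.mono_set hsb), neg_sub]
  have hΨ'_le : ∫ u in a..b, Ψ' u ≤ ∫ u in a..b, E u * β u := by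
    refine integral_mono_on hab (hΨ.intervalIntegrable_of_ae_hasDerivAt hΨ')
      (hβ.continuousOn_mul hE.continuousOn) fun u hu => ?_
    have hyu : y b - P u ≤ y u := by linarith [h u hu, hP_eq u hu]
    calc Ψ' u = E u * β u - E u * g u * (y u - (y b - P u)) := by simp only [Ψ', r]; ring
      _ ≤ E u * β u := sub_le_self _ (mul_nonneg (mul_nonneg (exp_pos _).le (hg_nonneg u hu))
          (sub_nonneg.mpr hyu))
  have hFTC := hΨ.integral_eq_sub_of_ae_hasDerivAt hΨ'
  have ha : a ∈ Icc a b := left_mem_Icc.mpr hab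
  have hEa : E a = 1 := by simp [E]
  have hPb : P b = 0 := integral_same
  rw [hEa, hPb, hP_eq a ha] at hFTC
  linarith [h a ha]

theorem le_mul_exp_neg_integral_add_integral_of_forall_add_integral_le (hab : a ≤ b)
    (hy : ContinuousOn y (Icc a b)) (hg : IntervalIntegrable g volume a b)
    (hβ : IntervalIntegrable β volume a b) (hg_nonneg : ∀ τ ∈ Icc a b, 0 ≤ g τ)
    (h : ∀ s ∈ Icc a b, y b + ∫ τ in s..b, g τ * y τ ≤ y s + ∫ τ in s..b, β τ) :
    y b ≤ y a * exp (-∫ τ in a..b, g τ) + ∫ τ in a..b, exp (-∫ r in τ..b, g r) * β τ := by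
  have hweight : ∀ τ ∈ uIcc a b,
      exp (∫ r in a..τ, g r) * β τ * exp (-∫ r in a..b, g r) = exp (-∫ r in τ..b, g r) * β τ := by
    intro τ hτ
    rw [← integral_interval_sub_left hg (hg.mono_set (uIcc_subset_uIcc_left hτ)), mul_right_comm,
      ← exp_add]
    congr 2
    ring
  calc y b = exp (∫ τ in a..b, g τ) * y b * exp (-∫ τ in a..b, g τ) := by
        rw [mul_right_comm, ← exp_add, add_neg_cancel, exp_zero, one_mul]
    _ ≤ (y a + ∫ τ in a..b, exp (∫ r in a..τ, g r) * β τ) * exp (-∫ τ in a..b, g τ) := by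
        gcongr
        exact exp_integral_mul_le_of_forall_add_integral_le hab hy hg hβ hg_nonneg h
    _ = y a * exp (-∫ τ in a..b, g τ) + ∫ τ in a..b, exp (-∫ r in τ..b, g r) * β τ := by
        rw [add_mul, ← intervalIntegral.integral_mul_const, integral_congr hweight]

end Gronwall

theorem gronwall_integrated_form_general
    (T : ℝ)
    (y g β : ℝ → ℝ)
    (hy : ContinuousOn y (Set.Icc 0 T))
    (hg : IntegrableOn g (Set.Icc 0 T))
    (hβ : IntegrableOn β (Set.Icc 0 T))
    (hg_nonneg : ∀ τ ∈ Set.Icc 0 T, 0 ≤ g τ)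
    (h : ∀ s t : ℝ, 0 ≤ s → s ≤ t → t ≤ T →
      y t + ∫ τ in s..t, g τ * y τ ≤ y s + ∫ τ in s..t, β τ) :
    ∀ t ∈ Set.Icc 0 T,
      y t ≤ y 0 * Real.exp (-∫ τ in (0:ℝ)..t, g τ)
        + ∫ τ in (0:ℝ)..t, Real.exp (-∫ r in τ..t, g r) * β τ := by
  rintro t ⟨ht0, htT⟩
  have hsub : Icc 0 t ⊆ Icc 0 T := Icc_subset_Icc_right htT
  have hint : ∀ f : ℝ → ℝ, IntegrableOn f (Icc 0 T) → IntervalIntegrable f volume 0 t :=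
    fun f hf => (intervalIntegrable_iff_integrableOn_Icc_of_le ht0).mpr (hf.mono_set hsub)
  exact le_mul_exp_neg_integral_add_integral_of_forall_add_integral_le ht0 (hy.mono hsub)
    (hint g hg) (hint β hβ) (fun τ hτ => hg_nonneg τ (hsub hτ)) fun s hs => h s t hs.1 hs.2 htT

/-- **Gronwall-type lemma in integrated form** (Lemma 2.3 of the paper).
If a continuous `y` satisfies `y(t) + ∫_s^t g y ≤ y(s) + ∫_s^t β` for all
`0 ≤ s ≤ t ≤ T`, with `g ≥ 0` and `g, β` integrable, then
`y(t) ≤ y(0) e^{−∫₀^t g} + ∫₀^t e^{−∫_τ^t g} β(τ) dτ`. -/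
theorem gronwall_integrated_form
    (T : ℝ) (hT : 0 < T)
    (y g β : ℝ → ℝ)
    (hy : ContinuousOn y (Set.Icc 0 T))
    (hg : IntegrableOn g (Set.Icc 0 T))
    (hβ : IntegrableOn β (Set.Icc 0 T))
    (hg_nonneg : ∀ τ ∈ Set.Icc 0 T, 0 ≤ g τ)
    (h : ∀ s t : ℝ, 0 ≤ s → s ≤ t → t ≤ T →
      y t + ∫ τ in s..t, g τ * y τ ≤ y s + ∫ τ in s..t, β τ) :
    ∀ t ∈ Set.Icc 0 T,
      y t ≤ y 0 * Real.exp (-∫ τ in (0:ℝ)..t, g τ)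
        + ∫ τ in (0:ℝ)..t, Real.exp (-∫ r in τ..t, g r) * β τ :=
  gronwall_integrated_form_general T y g β hy hg hβ hg_nonneg h
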